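/- If x̄ is an AM-stationary point of problem (P) that satisfies the AM-regularity condition, then x̄ is an M-stationary point of (P). -/

import Mathlib

open Filter Topology RealInnerProductSpace

noncomputable section

/-- The (set-valued) Euclidean projection of `x` onto `D`:
`Π_D(x) = argmin_{z ∈ D} ‖z - x‖`. -/
def projSet {E : Type*} [NormedAddCommGroup E] (D : Set E) (x : E) : Set E :=
  {z | z ∈ D ∧ ∀ w ∈ D, ‖z - x‖ ≤ ‖w - x‖}

/-- The limiting (Mordukhovich) normal cone to `D` at `x`:
`N_D^lim(x) = limsup_{v → x} cone(v - Π_D(v))`, empty outside `D`. -/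
def limNormalCone {E : Type*} [NormedAddCommGroup E] [NormedSpace ℝ E]
    (D : Set E) (x : E) : Set E :=
  {w | x ∈ D ∧ ∃ v ws : ℕ → E,
    Tendsto v atTop (𝓝 x) ∧ Tendsto ws atTop (𝓝 w) ∧
    ∀ j, ∃ t : ℝ, ∃ p, 0 ≤ t ∧ p ∈ projSet D (v j) ∧ ws j = t • (v j - p)}

/-- The normal cone (of convex analysis) to the convex set `C` at `y`, empty outside `C`. -/
def convNormalCone {E : Type*} [NormedAddCommGroup E] [InnerProductSpace ℝ E]
    (C : Set E) (y : E) : Set E :=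
  {l | y ∈ C ∧ ∀ c ∈ C, ⟪l, c - y⟫ ≤ 0}

variable {X Y : Type*} [NormedAddCommGroup X] [InnerProductSpace ℝ X] [FiniteDimensional ℝ X]
  [NormedAddCommGroup Y] [InnerProductSpace ℝ Y] [FiniteDimensional ℝ Y]

/-- `xb` is an M-stationary (Mordukhovich-stationary) point of problem (P):
minimize `f x` s.t. `G x ∈ C`, `x ∈ D`. -/
def MStationary (f : X → ℝ) (G : X → Y) (C : Set Y) (D : Set X) (xb : X) : Prop :=
  G xb ∈ C ∧ xb ∈ D ∧
    ∃ l : Y, l ∈ convNormalCone C (G xb) ∧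
      ∃ w ∈ limNormalCone D xb,
        gradient f xb + ContinuousLinearMap.adjoint (fderiv ℝ G xb) l + w = 0

/-- `xb` is an AM-stationary (asymptotically M-stationary) point of problem (P). -/
def AMStationary (f : X → ℝ) (G : X → Y) (C : Set Y) (D : Set X) (xb : X) : Prop :=
  G xb ∈ C ∧ xb ∈ D ∧
    ∃ (xs εs : ℕ → X) (zs lam : ℕ → Y),
      Tendsto xs atTop (𝓝 xb) ∧ Tendsto εs atTop (𝓝 0) ∧ Tendsto zs atTop (𝓝 0) ∧
      ∀ k, lam k ∈ convNormalCone C (G (xs k) - zs k) ∧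
        ∃ w ∈ limNormalCone D (xs k),
          εs k = gradient f (xs k) +
            ContinuousLinearMap.adjoint (fderiv ℝ G (xs k)) (lam k) + w

/-- The set `M(x,z) = G'(x)* N_C(G(x) - z) + N_D^lim(x)`. -/
def Mset (G : X → Y) (C : Set Y) (D : Set X) (x : X) (z : Y) : Set X :=
  {v | ∃ l ∈ convNormalCone C (G x - z), ∃ w ∈ limNormalCone D x,
    v = ContinuousLinearMap.adjoint (fderiv ℝ G x) l + w}

/-- `xb` is AM-regular: `limsup_{x → xb, z → 0} M(x,z) ⊆ M(xb, 0)`. -/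
def AMRegular (G : X → Y) (C : Set Y) (D : Set X) (xb : X) : Prop :=
  ∀ v : X,
    (∃ (xs : ℕ → X) (zs : ℕ → Y) (vs : ℕ → X),
      (∀ k, xs k ∈ D) ∧ Tendsto xs atTop (𝓝 xb) ∧ Tendsto zs atTop (𝓝 0) ∧
      Tendsto vs atTop (𝓝 v) ∧ ∀ k, vs k ∈ Mset G C D (xs k) (zs k)) →
    v ∈ Mset G C D xb 0

theorem ContDiff.continuous_gradient {F : Type*} [NormedAddCommGroup F] [InnerProductSpace ℝ F]
    [CompleteSpace F] {f : F → ℝ} (hf : ContDiff ℝ 1 f) : Continuous (gradient f) :=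
  (InnerProductSpace.toDual ℝ F).symm.continuous.comp (hf.continuous_fderiv one_ne_zero)

section

variable {f : X → ℝ} {G : X → Y} {C : Set Y} {D : Set X} {xb : X}

/-- The conclusion is the premise of `AMRegular` for `v = -∇f(xb)`, witnessed by the residuals
`εᵏ - ∇f(xᵏ)`. -/
theorem AMStationary.exists_tendsto_neg_gradient (hf : Continuous (gradient f))
    (hAM : AMStationary f G C D xb) :
    ∃ (xs : ℕ → X) (zs : ℕ → Y) (vs : ℕ → X),
      (∀ k, xs k ∈ D) ∧ Tendsto xs atTop (𝓝 xb) ∧ Tendsto zs atTop (𝓝 0) ∧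
      Tendsto vs atTop (𝓝 (-gradient f xb)) ∧ ∀ k, vs k ∈ Mset G C D (xs k) (zs k) := by
  obtain ⟨-, -, xs, εs, zs, lam, hxs, hεs, hzs, hk⟩ := hAM
  refine ⟨xs, zs, fun k => εs k - gradient f (xs k), fun k => ?_, hxs, hzs, ?_, fun k => ?_⟩
  · obtain ⟨-, w, hw, -⟩ := hk k
    -- `limNormalCone D x` is empty unless `x ∈ D`
    exact hw.1
  · simpa only [zero_sub, Function.comp_apply] using hεs.sub ((hf.tendsto xb).comp hxs)
  · obtain ⟨hlam, w, hw, hε⟩ := hk k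
    exact ⟨lam k, hlam, w, hw, by simp only [hε]; abel⟩

theorem MStationary.of_neg_gradient_mem_Mset (hGC : G xb ∈ C) (hxbD : xb ∈ D)
    (h : -gradient f xb ∈ Mset G C D xb 0) : MStationary f G C D xb := by
  obtain ⟨l, hl, w, hw, hgrad⟩ := h
  refine ⟨hGC, hxbD, l, by rwa [sub_zero] at hl, w, hw, ?_⟩
  rw [← neg_neg (gradient f xb), hgrad]
  abel

end

theorem AM_stationary_and_AM_regular_implies_M_stationary_general
    (f : X → ℝ) (G : X → Y) (C : Set Y) (D : Set X)
    (hf : ContDiff ℝ 1 f)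
    (xb : X)
    (hAM : AMStationary f G C D xb) (hreg : AMRegular G C D xb) :
    MStationary f G C D xb :=
  MStationary.of_neg_gradient_mem_Mset hAM.1 hAM.2.1
    (hreg _ (hAM.exists_tendsto_neg_gradient hf.continuous_gradient))

/-- an AM-stationary point satisfying AM-regularity is M-stationary. -/
theorem AM_stationary_and_AM_regular_implies_M_stationary
    (f : X → ℝ) (G : X → Y) (C : Set Y) (D : Set X)
    (hf : ContDiff ℝ 1 f) (hG : ContDiff ℝ 1 G)
    (hCne : C.Nonempty) (hCcl : IsClosed C) (hCconv : Convex ℝ C)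
    (hDne : D.Nonempty) (hDcl : IsClosed D)
    (xb : X)
    (hAM : AMStationary f G C D xb) (hreg : AMRegular G C D xb) :
    MStationary f G C D xb :=
  AM_stationary_and_AM_regular_implies_M_stationary_general f G C D hf xb hAM hreg
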